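/- If A(t) is a smooth curve of Lagrangian frames such that the columns of Ä(t) are linear combinations of the columns of A(t), then Ȧ(t)ᵀ J Ȧ(t) = O for all t; in particular the Wronskian W(t) = −A(t)ᵀ J Ȧ(t) is constant. -/

import Mathlib

open Matrix

noncomputable section

/-- `MDeriv A A'` says that `A'` is the entrywise derivative of the matrix curve `A`. -/
def MDeriv {m k : Type*} (A A' : ℝ → Matrix m k ℝ) : Prop :=
  ∀ (i : m) (j : k) (t : ℝ), HasDerivAt (fun s => A s i j) (A' t i j) t

lemma MDeriv.mul {m k l : Type*} [Fintype k] {A A' : ℝ → Matrix m k ℝ}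
    {B B' : ℝ → Matrix k l ℝ} (hA : MDeriv A A') (hB : MDeriv B B') :
    MDeriv (fun t => A t * B t) (fun t => A' t * B t + A t * B' t) := by
  intro i j t
  simp only [Matrix.mul_apply, Matrix.add_apply]
  rw [← Finset.sum_add_distrib]
  exact HasDerivAt.fun_sum fun c _ => (hA i c t).mul (hB c j t)

lemma MDeriv.transpose {m k : Type*} {A A' : ℝ → Matrix m k ℝ} (hA : MDeriv A A') :
    MDeriv (fun t => (A t)ᵀ) (fun t => (A' t)ᵀ) := fun i j t => hA j i t

lemma MDeriv.const_mul {m k l : Type*} [Fintype k] (C : Matrix m k ℝ)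
    {B B' : ℝ → Matrix k l ℝ} (hB : MDeriv B B') :
    MDeriv (fun t => C * B t) (fun t => C * B' t) := by
  intro i j t
  simp only [Matrix.mul_apply]
  exact HasDerivAt.fun_sum fun c _ => (hB c j t).const_mul _

/-- if the columns of `Ä(t)` are linear combinations of the columns
of `A(t)` for a curve of Lagrangian frames, then `Ȧ(t)ᵀ J Ȧ(t) = 0`; in particular
the Wronskian `W(t) = -A(t)ᵀ J Ȧ(t)` is constant. -/
theorem stmt18 {n : ℕ} (A A' A'' : ℝ → Matrix (Fin n ⊕ Fin n) (Fin n) ℝ)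
    (J : Matrix (Fin n ⊕ Fin n) (Fin n ⊕ Fin n) ℝ)
    (hJ : J = fromBlocks 0 (-1) 1 0)
    (hA : MDeriv A A') (hA' : MDeriv A' A'')
    (hrank : ∀ t, (A t).rank = n)
    (hLag : ∀ t, (A t)ᵀ * J * A t = 0)
    (hnormal : ∀ t, ∃ Q : Matrix (Fin n) (Fin n) ℝ, A'' t = A t * Q) :
    (∀ t, (A' t)ᵀ * J * A' t = 0) ∧
    (∀ t s : ℝ, -((A t)ᵀ * J * A' t) = -((A s)ᵀ * J * A' s)) := by
  have hJT : Jᵀ = -J := by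
    subst hJ
    simp [Matrix.fromBlocks_transpose, Matrix.fromBlocks_neg]
  -- derivative of AᵀJA
  have hD1 : MDeriv (fun t => (A t)ᵀ * (J * A t))
      (fun t => (A' t)ᵀ * (J * A t) + (A t)ᵀ * (J * A' t)) :=
    hA.transpose.mul (MDeriv.const_mul J hA)
  -- since AᵀJA = 0 constantly, the derivative is 0
  have key1 : ∀ t, (A' t)ᵀ * (J * A t) + (A t)ᵀ * (J * A' t) = 0 := by
    intro t
    ext i j
    have h0 : (fun s => ((A s)ᵀ * (J * A s)) i j) = fun _ => (0 : ℝ) := by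
      funext s
      have := hLag s
      rw [Matrix.mul_assoc] at this
      rw [this]; rfl
    have := hD1 i j t
    rw [h0] at this
    exact this.unique (hasDerivAt_const _ _)
  -- symmetry of S = AᵀJA'
  have hSym : ∀ t, ((A t)ᵀ * (J * A' t))ᵀ = (A t)ᵀ * (J * A' t) := by
    intro t
    have h := key1 t
    have h2 : (A' t)ᵀ * (J * A t) = -((A t)ᵀ * (J * A' t)) := by
      linear_combination (norm := noncomm_ring) h
    calc ((A t)ᵀ * (J * A' t))ᵀ = (A' t)ᵀ * (Jᵀ * A t) := by
          simp [Matrix.transpose_mul, Matrix.mul_assoc]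
      _ = -((A' t)ᵀ * (J * A t)) := by rw [hJT]; simp [Matrix.mul_assoc]
      _ = (A t)ᵀ * (J * A' t) := by rw [h2, neg_neg]
  -- derivative of S
  have hD2 : MDeriv (fun t => (A t)ᵀ * (J * A' t))
      (fun t => (A' t)ᵀ * (J * A' t) + (A t)ᵀ * (J * A'' t)) :=
    hA.transpose.mul (MDeriv.const_mul J hA')
  -- AᵀJA'' = 0
  have hAJA'' : ∀ t, (A t)ᵀ * (J * A'' t) = 0 := by
    intro t
    obtain ⟨Q, hQ⟩ := hnormal t
    rw [hQ, ← Matrix.mul_assoc, ← Matrix.mul_assoc, hLag t, Matrix.zero_mul]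
  have hS' : ∀ t, (A' t)ᵀ * (J * A' t) + (A t)ᵀ * (J * A'' t) = (A' t)ᵀ * (J * A' t) := by
    intro t; rw [hAJA'' t, add_zero]
  -- derivative of S is symmetric (since S is symmetric pointwise)
  have hS'sym : ∀ t, ((A' t)ᵀ * (J * A' t))ᵀ = (A' t)ᵀ * (J * A' t) := by
    intro t
    ext i j
    have hji := hD2 j i t
    have hij := hD2 i j t
    have heq : (fun s => ((A s)ᵀ * (J * A' s)) j i) = fun s => ((A s)ᵀ * (J * A' s)) i j := by
      funext s
      have := hSym s
      exact (congrFun (congrFun this i) j : _)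
    rw [heq] at hji
    have := hji.unique hij
    simp only [Matrix.add_apply] at this
    rw [hAJA'' t] at this
    simpa [Matrix.transpose_apply] using this
  -- S' is also skew
  have hskew : ∀ t, ((A' t)ᵀ * (J * A' t))ᵀ = -((A' t)ᵀ * (J * A' t)) := by
    intro t
    simp [Matrix.transpose_mul, hJT, Matrix.mul_assoc]
  have hzero : ∀ t, (A' t)ᵀ * (J * A' t) = 0 := by
    intro t
    have h1 := hS'sym t
    have h2 := hskew t
    rw [h1] at h2
    have : (2 : ℝ) • ((A' t)ᵀ * (J * A' t)) = 0 := by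
      rw [two_smul]
      linear_combination (norm := abel) h2
    have := smul_eq_zero.mp this
    rcases this with h | h
    · norm_num at h
    · exact h
  constructor
  · intro t; rw [Matrix.mul_assoc]; exact hzero t
  · -- S constant since S' = 0
    intro t s
    have hconst : ∀ t s : ℝ, ((A t)ᵀ * (J * A' t)) = ((A s)ᵀ * (J * A' s)) := by
      intro t s
      ext i j
      have : ∀ u : ℝ, HasDerivAt (fun v => ((A v)ᵀ * (J * A' v)) i j) 0 u := by
        intro u
        have h0 : ((A' u)ᵀ * (J * A' u) + (A u)ᵀ * (J * A'' u)) i j = 0 := by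
          rw [hS' u, hzero u]; rfl
        simpa only [h0] using hD2 i j u
      exact is_const_of_deriv_eq_zero (fun u => (this u).differentiableAt)
        (fun u => (this u).deriv) t s
    rw [Matrix.mul_assoc, Matrix.mul_assoc, hconst t s]
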